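/- Let P be a transition function on a Polish space X and suppose there exist α ∈ (0,1], an open set O, integers n₁,…,n_k, and x₁, x₂ ∈ X such that P admits the decomposition P^{n₁+…+n_k}(x_i, ·) = (α/2)ν₁ⁱ P^{n₂+…+n_k} + (α/2)(1−α/2)ν₂ⁱ P^{n₃+…+n_k} + … + (α/2)(1−α/2)^{k−1}ν_kⁱ + (1−α/2)^k μ_kⁱ for probability measures ν₁ⁱ,…,ν_kⁱ, μ_kⁱ with supp νⱼⁱ ⊂ O (i = 1,2). If f is bounded measurable with |∫ Pⁿf dνⱼ¹ − ∫ Pⁿf dνⱼ²| ≤ ε/2 for all j ≤ k and n ∈ ℕ, and 4(1−α/2)^k‖f‖_∞ ≤ ε, then |Pⁿf(x₁) − Pⁿf(x₂)| < ε for all n ≥ n₁+…+n_k. -/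

import Mathlib

open MeasureTheory Filter Topology Metric
open scoped ENNReal

noncomputable def stepN {X : Type*} [MeasurableSpace X] (P : X → Measure X) :
    ℕ → X → Measure X
  | 0, x => Measure.dirac x
  | n + 1, x => (stepN P n x).bind P

section Aux

variable {X : Type*} [MeasurableSpace X]

lemma stepN_zero (P : X → Measure X) : stepN P 0 = Measure.dirac := rfl

lemma stepN_succ (P : X → Measure X) (n : ℕ) (x : X) :
    stepN P (n + 1) x = (stepN P n x).bind P := rfl

lemma measurable_stepN (P : X → Measure X) (hP : Measurable P) (n : ℕ) :
    Measurable (stepN P n) := by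
  induction n with
  | zero => exact Measure.measurable_dirac
  | succ n ih => exact (Measure.measurable_bind' hP).comp ih

lemma isProb_bind (μ : Measure X) [IsProbabilityMeasure μ] (g : X → Measure X)
    (hg : Measurable g) (hgp : ∀ x, IsProbabilityMeasure (g x)) :
    IsProbabilityMeasure (μ.bind g) := by
  refine ⟨?_⟩
  rw [Measure.bind_apply MeasurableSet.univ hg.aemeasurable]
  have : ∀ y, g y Set.univ = 1 := fun y => (hgp y).measure_univ
  simp only [this, lintegral_one, measure_univ]

lemma isProb_stepN (P : X → Measure X) (hP : Measurable P)
    (hprob : ∀ x, IsProbabilityMeasure (P x)) (n : ℕ) (x : X) :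
    IsProbabilityMeasure (stepN P n x) := by
  induction n with
  | zero => rw [stepN_zero]; infer_instance
  | succ n ih =>
    rw [stepN_succ]
    exact isProb_bind _ P hP hprob

lemma stepN_add (P : X → Measure X) (hP : Measurable P) (a b : ℕ) (x : X) :
    stepN P (a + b) x = (stepN P a x).bind (stepN P b) := by
  induction b with
  | zero => rw [stepN_zero]; simp
  | succ b ih =>
    rw [show a + (b + 1) = (a + b) + 1 from rfl, stepN_succ, ih,
      Measure.bind_bind (measurable_stepN P hP b).aemeasurable hP.aemeasurable]
    rfl

lemma integrable_of_bounded (μ : Measure X) [IsFiniteMeasure μ]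
    (f : X → ℝ) (hf : Measurable f) (C : ℝ) (hC : ∀ u, |f u| ≤ C) :
    Integrable f μ :=
  ⟨hf.aestronglyMeasurable,
    HasFiniteIntegral.of_bounded (C := C)
      (ae_of_all _ fun u => by simpa [Real.norm_eq_abs] using hC u)⟩

lemma abs_integral_le_of_bounded (μ : Measure X) [IsProbabilityMeasure μ]
    (f : X → ℝ) (C : ℝ) (hC : ∀ u, |f u| ≤ C) :
    |∫ u, f u ∂μ| ≤ C := by
  have h := norm_integral_le_of_norm_le_const (μ := μ) (f := f) (C := C)
    (ae_of_all _ fun u => by simpa [Real.norm_eq_abs] using hC u)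
  simpa [Real.norm_eq_abs, measure_univ] using h

lemma integral_bind_of_bounded (μ : Measure X) [IsProbabilityMeasure μ]
    (g : X → Measure X) (hg : Measurable g) (hgp : ∀ x, IsProbabilityMeasure (g x))
    (f : X → ℝ) (hf : Measurable f) (C : ℝ) (hC : ∀ u, |f u| ≤ C) :
    ∫ y, f y ∂(μ.bind g) = ∫ x, ∫ y, f y ∂(g x) ∂μ := by
  letI κ : ProbabilityTheory.Kernel X X := ⟨g, hg⟩
  haveI : ProbabilityTheory.IsMarkovKernel κ := ⟨hgp⟩
  have hbind : μ.bind g = (μ.compProd κ).map Prod.snd := by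
    ext s hs
    rw [Measure.bind_apply hs hg.aemeasurable, Measure.map_apply measurable_snd hs,
      Measure.compProd_apply (measurable_snd hs)]
    rfl
  have hint : Integrable (fun p : X × X => f p.2) (μ.compProd κ) :=
    integrable_of_bounded _ _ (hf.comp measurable_snd) C (fun u => hC u.2)
  rw [hbind, integral_map measurable_snd.aemeasurable hf.aestronglyMeasurable,
    Measure.integral_compProd hint]
  rfl

lemma measurable_integral_stepN (P : X → Measure X) (hP : Measurable P)
    (hprob : ∀ x, IsProbabilityMeasure (P x)) (r : ℕ)
    (f : X → ℝ) (hf : Measurable f) :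
    Measurable fun y => ∫ u, f u ∂ stepN P r y := by
  letI κ : ProbabilityTheory.Kernel X X := ⟨stepN P r, measurable_stepN P hP r⟩
  haveI : ProbabilityTheory.IsMarkovKernel κ := ⟨isProb_stepN P hP hprob r⟩
  have : StronglyMeasurable fun x => ∫ y, (fun (_ : X) y => f y) x y ∂ κ x :=
    MeasureTheory.StronglyMeasurable.integral_kernel_prod_right
      (hf.stronglyMeasurable.comp_measurable measurable_snd)
  exact this.measurable

end Aux

/-- Given the Lasota–Yorke type decomposition of
`P^{n₁+…+n_k}(xᵢ,·)` into pushed-forward measures `νⱼⁱ` supported in `O` plus a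
`(1−α/2)^k` remainder, the coupling estimate `|∫ Pⁿf dνⱼ¹ − ∫ Pⁿf dνⱼ²| ≤ ε/2` and the
smallness `4(1−α/2)^k‖f‖_∞ ≤ ε` imply `|Pⁿf(x₁) − Pⁿf(x₂)| < ε` for `n ≥ n₁+…+n_k`. -/
theorem stmt11 {X : Type*} [MetricSpace X] [MeasurableSpace X] [BorelSpace X]
    (P : X → Measure X) (hP : Measurable P) (hprob : ∀ x, IsProbabilityMeasure (P x))
    (k : ℕ) (hk : 0 < k) (n : Fin k → ℕ) (α : ℝ) (hα0 : 0 < α) (hα1 : α ≤ 1)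
    (O : Set X) (hO : IsOpen O) (x₁ x₂ : X)
    (ν : Fin 2 → Fin k → Measure X) (μk : Fin 2 → Measure X)
    (hν : ∀ i j, IsProbabilityMeasure (ν i j)) (hμk : ∀ i, IsProbabilityMeasure (μk i))
    (hsupp : ∀ i j, ν i j Oᶜ = 0)
    (hdecomp : ∀ i : Fin 2, stepN P (∑ j, n j) (![x₁, x₂] i) =
      (∑ j : Fin k, (ENNReal.ofReal (α / 2 * (1 - α / 2) ^ (j : ℕ))) •
        ((ν i j).bind fun y => stepN P (∑ l ∈ Finset.Ioi j, n l) y))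
      + (ENNReal.ofReal ((1 - α / 2) ^ k)) • μk i)
    (f : X → ℝ) (hf : Measurable f) (Cf : ℝ) (hfb : ∀ u, |f u| ≤ Cf)
    (ε : ℝ) (hε : 0 < ε) (hkε : 4 * (1 - α / 2) ^ k * Cf ≤ ε)
    (hcouple : ∀ j : Fin k, ∀ m : ℕ,
      |(∫ y, (∫ u, f u ∂ stepN P m y) ∂ ν 0 j) -
       (∫ y, (∫ u, f u ∂ stepN P m y) ∂ ν 1 j)| ≤ ε / 2) :
    ∀ m : ℕ, (∑ j, n j) ≤ m →
      |(∫ u, f u ∂ stepN P m x₁) - (∫ u, f u ∂ stepN P m x₂)| < ε := by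
  intro m hm
  have hPinst : ∀ (q : ℕ) (x : X), IsProbabilityMeasure (stepN P q x) :=
    isProb_stepN P hP hprob
  have hβ0 : (0:ℝ) < 1 - α / 2 := by linarith
  have hβ1 : (1:ℝ) - α / 2 < 1 := by linarith
  have hCf0 : 0 ≤ Cf := le_trans (abs_nonneg _) (hfb x₁)
  obtain ⟨r, rfl⟩ : ∃ r, m = (∑ j, n j) + r := ⟨m - _, (Nat.add_sub_cancel' hm).symm⟩
  set N := ∑ j, n j with hN
  set g : X → ℝ := fun y => ∫ u, f u ∂ stepN P r y with hg
  have hgm : Measurable g := measurable_integral_stepN P hP hprob r f hf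
  have hgb : ∀ y, |g y| ≤ Cf := fun y => by
    haveI := hPinst r y
    exact abs_integral_le_of_bounded _ f Cf hfb
  -- rewrite the m-step integral through the N-step decomposition
  have hrewrite : ∀ x : X, (∫ u, f u ∂ stepN P (N + r) x) = ∫ y, g y ∂ stepN P N x := by
    intro x
    haveI := hPinst N x
    rw [stepN_add P hP N r x,
      integral_bind_of_bounded _ _ (measurable_stepN P hP r) (hPinst r) f hf Cf hfb]
  -- the values of the integrals against the decomposition pieces
  set T : Fin 2 → Fin k → ℝ := fun i j =>
    ∫ y, g y ∂ ((ν i j).bind fun y => stepN P (∑ l ∈ Finset.Ioi j, n l) y) with hTdef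
  set R : Fin 2 → ℝ := fun i => ∫ y, g y ∂ μk i with hRdef
  have hbindprob : ∀ (i : Fin 2) (j : Fin k),
      IsProbabilityMeasure ((ν i j).bind fun y => stepN P (∑ l ∈ Finset.Ioi j, n l) y) := by
    intro i j
    haveI := hν i j
    exact isProb_bind _ _ (measurable_stepN P hP _) (hPinst _)
  have hT : ∀ i j, T i j =
      ∫ y, (∫ u, f u ∂ stepN P ((∑ l ∈ Finset.Ioi j, n l) + r) y) ∂ ν i j := by
    intro i j
    haveI := hν i j
    show (∫ y, g y ∂ ((ν i j).bind fun y => stepN P (∑ l ∈ Finset.Ioi j, n l) y)) = _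
    rw [integral_bind_of_bounded (ν i j) _ (measurable_stepN P hP _) (hPinst _) g hgm Cf hgb]
    refine integral_congr_ae (Eventually.of_forall fun y => ?_)
    haveI := hPinst (∑ l ∈ Finset.Ioi j, n l) y
    show (∫ z, g z ∂ stepN P (∑ l ∈ Finset.Ioi j, n l) y)
      = ∫ u, f u ∂ stepN P ((∑ l ∈ Finset.Ioi j, n l) + r) y
    rw [stepN_add P hP _ r y,
      integral_bind_of_bounded _ _ (measurable_stepN P hP r) (hPinst r) f hf Cf hfb]
  have hTabs : ∀ i j, |T i j| ≤ Cf := by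
    intro i j
    haveI := hbindprob i j
    exact abs_integral_le_of_bounded _ g Cf hgb
  have hRabs : ∀ i, |R i| ≤ Cf := by
    intro i
    haveI := hμk i
    exact abs_integral_le_of_bounded _ g Cf hgb
  -- decompose the integral at N steps
  have hc0 : ∀ j : Fin k, (0:ℝ) < α / 2 * (1 - α / 2) ^ (j : ℕ) := fun j =>
    mul_pos (by linarith) (pow_pos hβ0 _)
  have hdec : ∀ i : Fin 2, (∫ y, g y ∂ stepN P N (![x₁, x₂] i)) =
      (∑ j : Fin k, (α / 2 * (1 - α / 2) ^ (j : ℕ)) * T i j)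
        + (1 - α / 2) ^ k * R i := by
    intro i
    rw [hdecomp i]
    have hint : ∀ j : Fin k, Integrable g
        ((ENNReal.ofReal (α / 2 * (1 - α / 2) ^ (j : ℕ))) •
          ((ν i j).bind fun y => stepN P (∑ l ∈ Finset.Ioi j, n l) y)) := by
      intro j
      haveI := hbindprob i j
      refine (integrable_smul_measure ?_ ENNReal.ofReal_ne_top).mpr
        (integrable_of_bounded _ g hgm Cf hgb)
      simpa using (ENNReal.ofReal_pos.mpr (hc0 j)).ne'
    have hintsum : Integrable g (∑ j : Fin k,
        (ENNReal.ofReal (α / 2 * (1 - α / 2) ^ (j : ℕ))) •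
          ((ν i j).bind fun y => stepN P (∑ l ∈ Finset.Ioi j, n l) y)) :=
      integrable_finset_sum_measure.mpr fun j _ => hint j
    have hintR : Integrable g ((ENNReal.ofReal ((1 - α / 2) ^ k)) • μk i) := by
      haveI := hμk i
      refine (integrable_smul_measure ?_ ENNReal.ofReal_ne_top).mpr
        (integrable_of_bounded _ g hgm Cf hgb)
      simpa using (ENNReal.ofReal_pos.mpr (pow_pos hβ0 k)).ne'
    rw [integral_add_measure hintsum hintR, integral_finset_sum_measure fun j _ => hint j]
    simp only [integral_smul_measure, smul_eq_mul]
    rw [ENNReal.toReal_ofReal (le_of_lt (pow_pos hβ0 k))]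
    congr 1
    refine Finset.sum_congr rfl fun j _ => ?_
    rw [ENNReal.toReal_ofReal (le_of_lt (hc0 j))]
  have h1 : (∫ u, f u ∂ stepN P (N + r) x₁) =
      (∑ j : Fin k, (α / 2 * (1 - α / 2) ^ (j : ℕ)) * T 0 j) + (1 - α / 2) ^ k * R 0 := by
    have := hdec 0
    simpa using (hrewrite x₁).trans this
  have h2 : (∫ u, f u ∂ stepN P (N + r) x₂) =
      (∑ j : Fin k, (α / 2 * (1 - α / 2) ^ (j : ℕ)) * T 1 j) + (1 - α / 2) ^ k * R 1 := by
    have := hdec 1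
    simpa using (hrewrite x₂).trans this
  have hTcouple : ∀ j : Fin k, |T 0 j - T 1 j| ≤ ε / 2 := by
    intro j
    rw [hT 0 j, hT 1 j]
    exact hcouple j _
  have hsum : (∑ j : Fin k, α / 2 * (1 - α / 2) ^ (j : ℕ)) = 1 - (1 - α / 2) ^ k := by
    rw [← Finset.mul_sum, Fin.sum_univ_eq_sum_range (fun j => (1 - α / 2) ^ j) k,
      geom_sum_eq (ne_of_lt hβ1) k]
    have hαne : α ≠ 0 := ne_of_gt hα0
    field_simp
    ring_nf
    simp [hαne]
  have hbk0 : (0:ℝ) < (1 - α / 2) ^ k := pow_pos hβ0 k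
  calc |(∫ u, f u ∂ stepN P (N + r) x₁) - (∫ u, f u ∂ stepN P (N + r) x₂)|
      = |(∑ j : Fin k, (α / 2 * (1 - α / 2) ^ (j : ℕ)) * (T 0 j - T 1 j))
          + (1 - α / 2) ^ k * (R 0 - R 1)| := by
        rw [h1, h2]
        congr 1
        simp only [mul_sub]
        rw [Finset.sum_sub_distrib]
        ring
    _ ≤ (∑ j : Fin k, (α / 2 * (1 - α / 2) ^ (j : ℕ)) * |T 0 j - T 1 j|)
          + (1 - α / 2) ^ k * |R 0 - R 1| := by
        refine le_trans (abs_add_le _ _) (add_le_add ?_ ?_)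
        · refine le_trans (Finset.abs_sum_le_sum_abs _ _) (Finset.sum_le_sum fun j _ => ?_)
          rw [abs_mul, abs_of_pos (hc0 j)]
        · rw [abs_mul, abs_of_pos hbk0]
    _ ≤ (∑ j : Fin k, (α / 2 * (1 - α / 2) ^ (j : ℕ)) * (ε / 2))
          + (1 - α / 2) ^ k * (2 * Cf) := by
        refine add_le_add (Finset.sum_le_sum fun j _ =>
          mul_le_mul_of_nonneg_left (hTcouple j) (le_of_lt (hc0 j)))
          (mul_le_mul_of_nonneg_left ?_ (le_of_lt hbk0))
        calc |R 0 - R 1| ≤ |R 0| + |R 1| := abs_sub _ _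
          _ ≤ 2 * Cf := by have := hRabs 0; have := hRabs 1; linarith
    _ = (1 - (1 - α / 2) ^ k) * (ε / 2) + (1 - α / 2) ^ k * (2 * Cf) := by
        rw [← Finset.sum_mul, hsum]
    _ < ε := by nlinarith [hbk0, hε, hkε]
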